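/- Let $\alpha, \beta > 0$ and $p > 1$ with $\frac{\alpha+1}{p} + \frac{\beta+1}{p} \leq 1$, and let $\psi_1,\dots,\psi_{n+1}$, $\eta_1,\dots,\eta_{n+1}$ be real numbers with $|\psi_i|, |\eta_i| \leq 1$, $\sum_{i=1}^{n+1}\psi_i^2 = \sum_{i=1}^{n+1}\eta_i^2 = 1$, and suppose $(|\psi_i|)$ and $(|\eta_i|)$ are decreasing sequences. If $p \geq 2$, then $\sum_{i=1}^{n+1}|\psi_i|^{\alpha+1}|\eta_i|^{\beta+1} \geq (n+1)^{-\frac{p}{2}(\alpha+\beta+2)}$. -/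
import Mathlib


/-- Lower bound used in the case `1 < q < 2 ≤ p`. -/
theorem sum_abs_rpow_mul_ge_mixed_case (n : ℕ) (p α β : ℝ)
    (hα : 0 < α) (hβ : 0 < β) (hp1 : 1 < p)
    (hpq : (α + 1) / p + (β + 1) / p ≤ 1) (hp2 : 2 ≤ p)
    (ψ η : Fin (n + 1) → ℝ)
    (hψ1 : ∀ i, |ψ i| ≤ 1) (hη1 : ∀ i, |η i| ≤ 1)
    (hψs : ∑ i, ψ i ^ 2 = 1) (hηs : ∑ i, η i ^ 2 = 1)
    (hψdec : ∀ i j : Fin (n + 1), i ≤ j → |ψ j| ≤ |ψ i|)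
    (hηdec : ∀ i j : Fin (n + 1), i ≤ j → |η j| ≤ |η i|) :
    ∑ i, |ψ i| ^ (α + 1) * |η i| ^ (β + 1) ≥
      ((n : ℝ) + 1) ^ (-(p / 2) * (α + β + 2)) := by
  set N : ℝ := (n : ℝ) + 1 with hNdef
  have hN1 : (1 : ℝ) ≤ N := by
    have : (0 : ℝ) ≤ (n : ℝ) := Nat.cast_nonneg n
    linarith
  have hN0 : (0 : ℝ) < N := lt_of_lt_of_le one_pos hN1
  -- key: the first entry is large
  have key : ∀ (f : Fin (n+1) → ℝ), (∑ i, f i ^ 2 = 1) →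
      (∀ i j : Fin (n+1), i ≤ j → |f j| ≤ |f i|) →
      N ^ (-(1:ℝ)/2) ≤ |f 0| := by
    intro f hs hdec
    have hsq : N⁻¹ ≤ (f 0) ^ 2 := by
      have h1 : (1 : ℝ) ≤ N * (f 0) ^ 2 := by
        calc (1 : ℝ) = ∑ i, f i ^ 2 := hs.symm
          _ ≤ ∑ _i : Fin (n+1), (f 0) ^ 2 := by
              apply Finset.sum_le_sum
              intro i _
              have := hdec 0 i (Fin.zero_le i)
              have h2 : |f i| ^ 2 ≤ |f 0| ^ 2 := by
                apply pow_le_pow_left₀ (abs_nonneg _) this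
              simpa [sq_abs] using h2
          _ = N * (f 0) ^ 2 := by
              simp [Finset.sum_const, hNdef, mul_comm]
      rw [inv_le_iff_one_le_mul₀ hN0]
      linarith [h1]
    have hsqrt : Real.sqrt N⁻¹ ≤ Real.sqrt ((f 0) ^ 2) := Real.sqrt_le_sqrt hsq
    rw [Real.sqrt_sq_eq_abs] at hsqrt
    calc N ^ (-(1:ℝ)/2) = Real.sqrt N⁻¹ := by
          rw [Real.sqrt_eq_rpow, ← Real.rpow_neg_one N, ← Real.rpow_mul hN0.le]
          norm_num
      _ ≤ |f 0| := hsqrt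
  have hψ0 := key ψ hψs hψdec
  have hη0 := key η hηs hηdec
  have hNr : (0:ℝ) ≤ N ^ (-(1:ℝ)/2) := (Real.rpow_pos_of_pos hN0 _).le
  -- bound the first term
  have hterm : N ^ (-(1:ℝ)/2 * (α + β + 2)) ≤ |ψ 0| ^ (α+1) * |η 0| ^ (β+1) := by
    have h1 : (N ^ (-(1:ℝ)/2)) ^ (α+1) ≤ |ψ 0| ^ (α+1) :=
      Real.rpow_le_rpow hNr hψ0 (by linarith)
    have h2 : (N ^ (-(1:ℝ)/2)) ^ (β+1) ≤ |η 0| ^ (β+1) :=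
      Real.rpow_le_rpow hNr hη0 (by linarith)
    calc N ^ (-(1:ℝ)/2 * (α + β + 2))
        = (N ^ (-(1:ℝ)/2)) ^ (α+1) * (N ^ (-(1:ℝ)/2)) ^ (β+1) := by
          rw [← Real.rpow_mul hN0.le, ← Real.rpow_mul hN0.le, ← Real.rpow_add hN0]
          ring_nf
      _ ≤ |ψ 0| ^ (α+1) * |η 0| ^ (β+1) := by
          apply mul_le_mul h1 h2 (Real.rpow_nonneg hNr _) (Real.rpow_nonneg (abs_nonneg _) _)
  have hexp : N ^ (-(p / 2) * (α + β + 2)) ≤ N ^ (-(1:ℝ)/2 * (α + β + 2)) := by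
    apply Real.rpow_le_rpow_of_exponent_le hN1
    nlinarith
  have hsum : |ψ 0| ^ (α+1) * |η 0| ^ (β+1) ≤ ∑ i, |ψ i| ^ (α + 1) * |η i| ^ (β + 1) := by
    apply Finset.single_le_sum (f := fun i => |ψ i| ^ (α + 1) * |η i| ^ (β + 1))
    · intro i _
      positivity
    · exact Finset.mem_univ 0
  calc N ^ (-(p / 2) * (α + β + 2)) ≤ N ^ (-(1:ℝ)/2 * (α + β + 2)) := hexp
    _ ≤ |ψ 0| ^ (α+1) * |η 0| ^ (β+1) := hterm
    _ ≤ _ := hsum
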